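/- For θ_n = (cos(2πn/N), sin(2πn/N)), ω, ω̂ > 0 and x, z ∈ R^2, the quantity |(1/N) Σ_{n=1}^N exp(i θ_n · (ω̂ x − ω z))|^2 converges to J_0(ω̂ |x − (ω/ω̂) z|)^2 as N → ∞. -/

import Mathlib

/-! With `v = ω̂ x - ω z = ω̂ (x - (ω / ω̂) z)` of polar angle `α`, the `n`-th summand is
`exp (i ‖v‖ cos (θ - α))` at `θ = 2π (n + 1) / N`, so the averages are right Riemann sums of a
continuous function on `[0, 2π]` and converge to its mean. By periodicity the mean does not
depend on `α`, and the sine part of `exp (i ‖v‖ cos θ)` integrates to zero because it changes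
sign under `θ ↦ θ + π`; what is left is `J₀ ‖v‖`. -/

open Real Filter

/-- Bessel function of the first kind of order zero, via its integral representation. -/
noncomputable def J0 (r : ℝ) : ℝ :=
  (1 / (2 * π)) * ∫ φ in (0:ℝ)..(2 * π), Real.cos (r * Real.cos φ)

open Topology

section RiemannSum

variable {E : Type*} [NormedAddCommGroup E] [NormedSpace ℝ E] [CompleteSpace E]

noncomputable def rightRiemannSum (f : ℝ → E) (a b : ℝ) (N : ℕ) : E :=
  ((b - a) / N) • ∑ k ∈ Finset.range N, f (a + (k + 1) * ((b - a) / N))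

theorem norm_smul_sub_intervalIntegral_le {f : ℝ → E} {a b ε : ℝ} (hab : a ≤ b)
    (hf : IntervalIntegrable f MeasureTheory.volume a b)
    (h : ∀ t ∈ Set.Ioc a b, ‖f b - f t‖ ≤ ε) :
    ‖(b - a) • f b - ∫ t in a..b, f t‖ ≤ ε * (b - a) := by
  rw [← intervalIntegral.integral_const,
    ← intervalIntegral.integral_sub intervalIntegrable_const hf]
  have := intervalIntegral.norm_integral_le_of_norm_le_const (a := a) (b := b)
    fun t ht => h t (by rwa [Set.uIoc_of_le hab] at ht)
  rwa [abs_of_nonneg (sub_nonneg.2 hab)] at this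

theorem norm_rightRiemannSum_sub_integral_le {f : ℝ → E} {a b ε : ℝ} {N : ℕ} (hab : a ≤ b)
    (hN : N ≠ 0) (hf : ContinuousOn f (Set.Icc a b))
    (hε : ∀ s ∈ Set.Icc a b, ∀ t ∈ Set.Icc a b, dist s t ≤ (b - a) / N → dist (f s) (f t) ≤ ε) :
    ‖rightRiemannSum f a b N - ∫ t in a..b, f t‖ ≤ ε * (b - a) := by
  set h := (b - a) / N with hh
  set x : ℕ → ℝ := fun k => a + k * h
  have hNpos : (0 : ℝ) < N := by positivity
  have hh0 : 0 ≤ h := div_nonneg (sub_nonneg.2 hab) hNpos.le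
  have hxN : x N = b := by simp only [x, hh]; field_simp; ring
  have hx_mem : ∀ k ≤ N, x k ∈ Set.Icc a b := fun k hk => by
    refine ⟨le_add_of_nonneg_right (by positivity), ?_⟩
    rw [← hxN]
    simp only [x]
    gcongr
  have hstep : ∀ k, x (k + 1) - x k = h := fun k => by simp only [x]; push_cast; ring
  have hcell_sub : ∀ k < N, Set.Icc (x k) (x (k + 1)) ⊆ Set.Icc a b := fun k hk =>
    Set.Icc_subset_Icc (hx_mem k hk.le).1 (hx_mem (k + 1) hk).2
  have hint : ∀ k < N, IntervalIntegrable f MeasureTheory.volume (x k) (x (k + 1)) :=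
    fun k hk => (hf.mono (hcell_sub k hk)).intervalIntegrable_of_Icc (by linarith [hstep k])
  have hcell : ∀ k ∈ Finset.range N, ‖h • f (x (k + 1)) - ∫ t in x k..x (k + 1), f t‖ ≤ ε * h := by
    intro k hk
    have hk := Finset.mem_range.1 hk
    rw [← hstep k]
    refine norm_smul_sub_intervalIntegral_le (by linarith [hstep k]) (hint k hk) fun t ht => ?_
    rw [← dist_eq_norm]
    refine hε _ (hx_mem (k + 1) hk) _ (hcell_sub k hk (Set.Ioc_subset_Icc_self ht)) ?_
    rw [Real.dist_eq, abs_of_nonneg (by linarith [ht.2]), ← hstep k]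
    linarith [ht.1]
  have hsum : ∫ t in a..b, f t = ∑ k ∈ Finset.range N, ∫ t in x k..x (k + 1), f t := by
    rw [intervalIntegral.sum_integral_adjacent_intervals fun k hk => hint k hk, hxN]
    simp [x]
  calc ‖rightRiemannSum f a b N - ∫ t in a..b, f t‖
      = ‖∑ k ∈ Finset.range N, (h • f (x (k + 1)) - ∫ t in x k..x (k + 1), f t)‖ := by
        rw [hsum, Finset.sum_sub_distrib, rightRiemannSum, Finset.smul_sum]
        simp [x, hh]
    _ ≤ ∑ k ∈ Finset.range N, ε * h := norm_sum_le_of_le _ hcell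
    _ = ε * (b - a) := by
        rw [Finset.sum_const, Finset.card_range, nsmul_eq_mul, hh]
        field_simp

theorem tendsto_rightRiemannSum {f : ℝ → E} {a b : ℝ} (hab : a ≤ b)
    (hf : ContinuousOn f (Set.Icc a b)) :
    Tendsto (rightRiemannSum f a b) atTop (𝓝 (∫ t in a..b, f t)) := by
  refine Metric.tendsto_nhds.2 fun ε hε => ?_
  obtain ⟨c, hc, hcε⟩ := exists_pos_mul_lt hε (b - a)
  obtain ⟨δ, hδ, hfδ⟩ := Metric.uniformContinuousOn_iff.1
    (isCompact_Icc.uniformContinuousOn_of_continuous hf) c hc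
  have hmesh : ∀ᶠ N : ℕ in atTop, (b - a) / N < δ :=
    (tendsto_const_div_atTop_nhds_zero_nat (b - a)).eventually (gt_mem_nhds hδ)
  filter_upwards [hmesh, eventually_ne_atTop 0] with N hN hN0
  rw [dist_eq_norm]
  refine lt_of_le_of_lt (norm_rightRiemannSum_sub_integral_le hab hN0 hf
    fun s hs t ht hst => (hfδ s hs t ht (hst.trans_lt hN)).le) ?_
  linarith

theorem tendsto_inv_nat_smul_sum_equispaced_two_pi {f : ℝ → E} (hf : Continuous f) :
    Tendsto (fun N : ℕ => (N : ℝ)⁻¹ • ∑ n ∈ Finset.range N, f (2 * π * (n + 1) / N)) atTop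
      (𝓝 ((2 * π)⁻¹ • ∫ t in 0..2 * π, f t)) := by
  refine ((tendsto_rightRiemannSum two_pi_pos.le hf.continuousOn).const_smul (2 * π)⁻¹).congr
    fun N => ?_
  rw [rightRiemannSum, smul_smul, sub_zero]
  congr 1
  · field_simp
  · refine Finset.sum_congr rfl fun n _ => congrArg f ?_
    ring

end RiemannSum

theorem Function.Periodic.intervalIntegral_comp_add_eq {E : Type*} [NormedAddCommGroup E]
    [NormedSpace ℝ E] {f : ℝ → E} {T : ℝ} (hf : Function.Periodic f T) (c : ℝ) :
    ∫ x in 0..T, f (x + c) = ∫ x in 0..T, f x := by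
  simpa [add_comm T c] using hf.intervalIntegral_add_eq c 0

theorem integral_sin_mul_cos_eq_zero (r : ℝ) : ∫ φ in 0..2 * π, sin (r * cos φ) = 0 := by
  have hper : Function.Periodic (fun φ => sin (r * cos φ)) (2 * π) := fun φ => by
    simp [cos_add_two_pi]
  have h := hper.intervalIntegral_comp_add_eq π
  simp only [cos_add_pi, mul_neg, sin_neg, intervalIntegral.integral_neg] at h
  linarith

theorem ofReal_J0_eq_average_exp (r α : ℝ) :
    (J0 r : ℂ) = (2 * π)⁻¹ • ∫ t in 0..2 * π, Complex.exp (↑(r * cos (t - α)) * Complex.I) := by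
  have hper : Function.Periodic (fun t => Complex.exp (↑(r * cos t) * Complex.I)) (2 * π) :=
    fun t => by simp [cos_add_two_pi]
  simp_rw [sub_eq_add_neg, hper.intervalIntegral_comp_add_eq (-α), Complex.exp_mul_I,
    ← Complex.ofReal_cos, ← Complex.ofReal_sin]
  rw [intervalIntegral.integral_add ((by fun_prop : Continuous _).intervalIntegrable _ _)
      ((by fun_prop : Continuous _).intervalIntegrable _ _),
    intervalIntegral.integral_mul_const, intervalIntegral.integral_ofReal,
    intervalIntegral.integral_ofReal, integral_sin_mul_cos_eq_zero, J0, Complex.real_smul]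
  push_cast
  ring

theorem exists_cos_mul_add_sin_mul_eq_norm_mul_cos_sub (v : EuclideanSpace ℝ (Fin 2)) :
    ∃ α : ℝ, ∀ t : ℝ, cos t * v 0 + sin t * v 1 = ‖v‖ * cos (t - α) := by
  set c : ℂ := Complex.orthonormalBasisOneI.repr.symm v
  have hc : ‖c‖ = ‖v‖ := LinearIsometryEquiv.norm_map _ v
  refine ⟨c.arg, fun t => ?_⟩
  have hre : c.re = v 0 := by simp [c]
  have him : c.im = v 1 := by simp [c]
  rw [cos_sub, ← hc, ← hre, ← him, ← Complex.norm_mul_cos_arg, ← Complex.norm_mul_sin_arg]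
  ring

theorem squared_modulus_tendsto_besselJ0_sq_general
    (ω ωh : ℝ) (hωh : 0 < ωh)
    (x z : EuclideanSpace ℝ (Fin 2)) :
    Tendsto (fun N : ℕ =>
        (‖(1 / (N:ℂ)) * ∑ n ∈ Finset.range N,
          Complex.exp (Complex.I *
            (Real.cos (2 * π * (n + 1) / N) * (ωh * x 0 - ω * z 0) +
             Real.sin (2 * π * (n + 1) / N) * (ωh * x 1 - ω * z 1)))‖) ^ 2)
      atTop (nhds ((J0 (ωh * ‖x - (ω / ωh) • z‖)) ^ 2)) := by
  set v : EuclideanSpace ℝ (Fin 2) := ωh • x - ω • z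
  have hv : ‖v‖ = ωh * ‖x - (ω / ωh) • z‖ := by
    have hsmul : v = ωh • (x - (ω / ωh) • z) := by
      rw [smul_sub, smul_smul, mul_div_cancel₀ _ hωh.ne']
    rw [hsmul, norm_smul, norm_of_nonneg hωh.le]
  rw [← hv]
  obtain ⟨α, hα⟩ := exists_cos_mul_add_sin_mul_eq_norm_mul_cos_sub v
  have hlim := (tendsto_inv_nat_smul_sum_equispaced_two_pi
    (f := fun t => Complex.exp (↑(‖v‖ * cos (t - α)) * Complex.I)) (by fun_prop)).norm.pow 2
  rw [← ofReal_J0_eq_average_exp, Complex.norm_real, norm_eq_abs, sq_abs] at hlim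
  refine hlim.congr fun N => ?_
  rw [Complex.real_smul, one_div, Complex.ofReal_inv, Complex.ofReal_natCast]
  congr 4
  refine funext fun n => ?_
  rw [← hα, mul_comm]
  simp [v]

/-- For the equidistributed directions `θ_n = (cos (2πn/N), sin (2πn/N))`, the quantity
`|(1/N) Σ_n exp (i θ_n · (ω̂x − ωz))|²` converges to `J₀(ω̂ ‖x − (ω/ω̂) z‖)²` as `N → ∞`. -/
theorem squared_modulus_tendsto_besselJ0_sq
    (ω ωh : ℝ) (hω : 0 < ω) (hωh : 0 < ωh)
    (x z : EuclideanSpace ℝ (Fin 2)) :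
    Tendsto (fun N : ℕ =>
        (‖(1 / (N:ℂ)) * ∑ n ∈ Finset.range N,
          Complex.exp (Complex.I *
            (Real.cos (2 * π * (n + 1) / N) * (ωh * x 0 - ω * z 0) +
             Real.sin (2 * π * (n + 1) / N) * (ωh * x 1 - ω * z 1)))‖) ^ 2)
      atTop (nhds ((J0 (ωh * ‖x - (ω / ωh) • z‖)) ^ 2)) :=
  squared_modulus_tendsto_besselJ0_sq_general ω ωh hωh x z
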